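/- Let n ≥ 1 and let f be a solution of the n×n Pulsar puzzle. Then for every column c with 1 ≤ c ≤ n, the top-row entry satisfies f(1,c) = n + 1 − (number of cells of C_n in column c); equivalently, f(1,c) is one more than the number of cells in column c not belonging to C_n. -/

import Mathlib

/-!
Column `c` of `C_n` holds `colCount n c` circled cells and row `r` holds `rowCount n r`, where both
closed forms permute `{1, …, n}`, and `C_n` is exactly the staircase
`{(r, c) | colCount n c + rowCount n r ≥ n + 1}`. So `C_n` has `1 + ⋯ + n` cells; as a value `v`
written in a circled cell occurs there exactly `v` times, every `v ≤ n` occurs exactly `v` times,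
and exactly `∑_{w > n - m} w` circled cells carry a value `> n - m`. A column with `a` circled
cells, being Latin, holds at most `min a m` of them, and these bounds sum to the same total, so
all are attained. Taking `m = a`, every circled entry of column `c` exceeds `n - colCount n c`.
Both the top row (circled, Latin) and `c ↦ n + 1 - colCount n c` permute `{1, …, n}`, so this
lower bound on `f (1, c)` is an equality.
-/

/-- The circled set `C n` of the `n × n` Pulsar puzzle, as a predicate on cells `(r, c)`
(1-indexed).  `C 1 = {(1,1)}`, and for `n ≥ 2`, a cell `(r,c)` of the grid is circled iff
`r = 1`, or `r ≥ 2`, `c ≥ 2` and `(n - c + 1, r - 1)` is circled in `C (n-1)`. -/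
def Circled : ℕ → ℕ × ℕ → Prop
  | 0, _ => False
  | 1, p => p = (1, 1)
  | (n + 2), (r, c) =>
      1 ≤ r ∧ r ≤ n + 2 ∧ 1 ≤ c ∧ c ≤ n + 2 ∧
        (r = 1 ∨ (2 ≤ r ∧ 2 ≤ c ∧ Circled (n + 1) (n + 2 - c + 1, r - 1)))

/-- `f` is a Latin square of order `n`: on the grid of cells `(r, c)` with `1 ≤ r, c ≤ n`
it takes values in `{1, …, n}`, with distinct values on distinct cells of any one row
and on distinct cells of any one column. -/
def IsLatinSquare (n : ℕ) (f : ℕ × ℕ → ℕ) : Prop :=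
  (∀ r c, 1 ≤ r → r ≤ n → 1 ≤ c → c ≤ n → 1 ≤ f (r, c) ∧ f (r, c) ≤ n) ∧
  (∀ r c₁ c₂, 1 ≤ r → r ≤ n → 1 ≤ c₁ → c₁ ≤ n → 1 ≤ c₂ → c₂ ≤ n → c₁ ≠ c₂ →
    f (r, c₁) ≠ f (r, c₂)) ∧
  (∀ r₁ r₂ c, 1 ≤ r₁ → r₁ ≤ n → 1 ≤ r₂ → r₂ ≤ n → 1 ≤ c → c ≤ n → r₁ ≠ r₂ →
    f (r₁, c) ≠ f (r₂, c))

/-- `f` is a solution of the `n × n` Pulsar puzzle: a Latin square of order `n` such that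
each circled entry equals the number of circled cells carrying that same value. -/
def IsPulsarSolution (n : ℕ) (f : ℕ × ℕ → ℕ) : Prop :=
  IsLatinSquare n f ∧
    ∀ p, Circled n p → f p = Set.ncard {q : ℕ × ℕ | Circled n q ∧ f q = f p}

open Finset

-- Closed-form solution of the recursions `colCount_add_two` and `rowCount_of_two_le`,
-- which the recursive definition of `Circled` forces on the column and row counts.
def colCount (n c : ℕ) : ℕ :=
  if (2 * c ≤ n + 1 ∧ c % 2 = 1) ∨ (n + 1 ≤ 2 * c ∧ (n - c) % 2 = 0) then c else n + 1 - c

def rowCount (n r : ℕ) : ℕ := if r = 1 then n else colCount (n - 1) (r - 1)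

section closedForm

variable {n c r : ℕ}

theorem colCount_mem_Icc (hc : c ∈ Icc 1 n) : colCount n c ∈ Icc 1 n := by
  rw [mem_Icc] at *; unfold colCount; split_ifs <;> omega

theorem colCount_colCount (hc : c ∈ Icc 1 n) : colCount n (colCount n c) = c := by
  rw [mem_Icc] at hc; unfold colCount; split_ifs <;> omega

theorem colCount_one : colCount n 1 = 1 := by
  unfold colCount; split_ifs <;> omega

theorem rowCount_one : rowCount n 1 = n := if_pos rfl

theorem rowCount_of_two_le (hr : 2 ≤ r) : rowCount (n + 1) r = colCount n (r - 1) :=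
  if_neg (by omega)

theorem colCount_add_two (hc : 2 ≤ c) (hcn : c ≤ n + 2) :
    colCount (n + 2) c = rowCount (n + 1) (n + 2 - c + 1) + 1 := by
  unfold rowCount colCount; split_ifs <;> omega

end closedForm

theorem circled_iff {n r c : ℕ} : Circled n (r, c) ↔
    1 ≤ r ∧ r ≤ n ∧ 1 ≤ c ∧ c ≤ n ∧ n + 1 ≤ colCount n c + rowCount n r := by
  induction n using Nat.strong_induction_on generalizing r c with
  | _ n ih =>
    match n with
    | 0 => simp only [Circled, false_iff]; omega
    | 1 => simp only [Circled, Prod.mk.injEq, rowCount, colCount]; split_ifs <;> omega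
    | n + 2 =>
      simp only [Circled, ih (n + 1) (by omega)]
      constructor
      · rintro ⟨hr1, hrn, hc1, hcn, rfl | ⟨hr2, hc2, -, -, -, -, h⟩⟩
        · have := colCount_mem_Icc (mem_Icc.2 ⟨hc1, hcn⟩)
          rw [rowCount_one, mem_Icc] at *
          omega
        · rw [colCount_add_two hc2 hcn, rowCount_of_two_le hr2]
          exact ⟨hr1, hrn, hc1, hcn, by omega⟩
      · rintro ⟨hr1, hrn, hc1, hcn, h⟩
        refine ⟨hr1, hrn, hc1, hcn, ?_⟩
        rcases eq_or_ne r 1 with rfl | hr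
        · exact Or.inl rfl
        rw [rowCount_of_two_le (by omega)] at h
        have hA := colCount_mem_Icc (n := n + 1) (c := r - 1) (mem_Icc.2 ⟨by omega, by omega⟩)
        rw [mem_Icc] at hA
        have hc2 : 2 ≤ c := by
          by_contra
          obtain rfl : c = 1 := by omega
          rw [colCount_one] at h
          omega
        rw [colCount_add_two hc2 hcn] at h
        exact Or.inr ⟨by omega, hc2, by omega, by omega, by omega, by omega, by omega⟩

instance (n : ℕ) : DecidablePred (Circled n) := fun p =>
  decidable_of_iff _ (circled_iff (r := p.1) (c := p.2)).symm

theorem sum_comp_of_injOn {ι M : Type*} [AddCommMonoid M] {s : Finset ι} {g : ι → ι}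
    (hg : Set.MapsTo g s s) (hinj : Set.InjOn g s) (F : ι → M) :
    ∑ x ∈ s, F (g x) = ∑ x ∈ s, F x :=
  sum_nbij g hg hinj (surjOn_of_injOn_of_card_le g hg hinj le_rfl) fun _ _ => rfl

theorem sum_Icc_min_add_sum_Icc (m n : ℕ) :
    ∑ k ∈ Icc 1 n, min k m + ∑ k ∈ Icc 1 (n - m), k = ∑ k ∈ Icc 1 n, k := by
  induction n with
  | zero => simp
  | succ n ih =>
    rw [sum_Icc_succ_top (by omega), sum_Icc_succ_top (by omega)]
    rcases le_or_gt m n with h | h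
    · rw [show n + 1 - m = n - m + 1 by omega, sum_Icc_succ_top (by omega)]
      omega
    · rw [show n + 1 - m = n - m by omega]
      omega

theorem card_filter_le_eq_sum_Icc {α : Type*} {s : Finset α} {φ : α → ℕ} {n : ℕ}
    (hφ : ∀ x ∈ s, φ x ∈ Icc 1 n) (hself : ∀ x ∈ s, #{y ∈ s | φ y = φ x} = φ x)
    (hs : #s = ∑ v ∈ Icc 1 n, v) {j : ℕ} (hj : j ≤ n) :
    #{x ∈ s | φ x ≤ j} = ∑ v ∈ Icc 1 j, v := by
  have hfiber_le : ∀ v ∈ Icc 1 n, #{y ∈ s | φ y = v} ≤ v := by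
    intro v _
    rcases eq_empty_or_nonempty {y ∈ s | φ y = v} with h | ⟨x, hx⟩
    · simp [h]
    · rw [mem_filter] at hx
      rw [← hx.2, hself x hx.1]
  have hfiber : ∀ v ∈ Icc 1 n, #{y ∈ s | φ y = v} = v :=
    (sum_eq_sum_iff_of_le hfiber_le).1 (by rw [← card_eq_sum_card_fiberwise hφ, hs])
  rw [card_eq_sum_card_fiberwise (t := Icc 1 j) fun x hx => by
    rw [mem_coe, mem_filter] at hx
    have := mem_Icc.1 (hφ x hx.1)
    exact mem_Icc.2 ⟨this.1, hx.2⟩]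
  refine sum_congr rfl fun v hv => ?_
  rw [mem_Icc] at hv
  rw [filter_filter]
  refine (congrArg card (filter_congr fun x _ => ?_)).trans
    (hfiber v (mem_Icc.2 ⟨hv.1, hv.2.trans hj⟩))
  constructor <;> intro h <;> omega

theorem colCount_injOn (n : ℕ) : Set.InjOn (colCount n) (Icc 1 n) := fun x hx y hy h => by
  rw [← colCount_colCount hx, h, colCount_colCount hy]

theorem card_filter_le_rowCount {n k : ℕ} (hk : 1 ≤ k) :
    #{r ∈ Icc 1 n | k ≤ rowCount n r} = n + 1 - k := by
  rw [← Nat.card_Icc k n]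
  refine card_nbij' (rowCount n) (fun v => if v = n then 1 else colCount (n - 1) v + 1)
    ?_ ?_ ?_ ?_ <;> intro x hx <;> simp only [mem_coe, mem_filter, mem_Icc] at hx ⊢ <;>
    unfold rowCount colCount at * <;> split_ifs at * <;> omega

theorem circled_top_row {n c : ℕ} (hc : c ∈ Icc 1 n) : Circled n (1, c) := by
  have := mem_Icc.1 (colCount_mem_Icc hc)
  rw [mem_Icc] at hc
  rw [circled_iff, rowCount_one]
  omega

theorem card_circled_col {n c : ℕ} (hc : c ∈ Icc 1 n) :
    #{r ∈ Icc 1 n | Circled n (r, c)} = colCount n c := by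
  have hA := mem_Icc.1 (colCount_mem_Icc hc)
  rw [mem_Icc] at hc
  rw [filter_congr (q := fun r => n + 1 - colCount n c ≤ rowCount n r) fun r hr => by
    rw [circled_iff]; rw [mem_Icc] at hr; omega, card_filter_le_rowCount (by omega)]
  omega

theorem ncard_circled_col {n c : ℕ} (hc : c ∈ Icc 1 n) :
    Set.ncard {r | Circled n (r, c)} = colCount n c := by
  rw [← card_circled_col hc, ← Set.ncard_coe_finset, coe_filter]
  congr 1
  ext r
  rw [Set.mem_ofPred_eq, Set.mem_ofPred_eq, mem_Icc, circled_iff]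
  tauto

theorem ncard_uncircled_col {n c : ℕ} (hc : c ∈ Icc 1 n) :
    Set.ncard {r | 1 ≤ r ∧ r ≤ n ∧ ¬ Circled n (r, c)} = n - colCount n c := by
  have hsplit := card_filter_add_card_filter_not (s := Icc 1 n) (fun r => Circled n (r, c))
  rw [card_circled_col hc, Nat.card_Icc] at hsplit
  have hset : {r | 1 ≤ r ∧ r ≤ n ∧ ¬ Circled n (r, c)} =
      ↑{r ∈ Icc 1 n | ¬ Circled n (r, c)} := by
    ext r
    rw [coe_filter, Set.mem_ofPred_eq, Set.mem_ofPred_eq, mem_Icc, and_assoc]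
  rw [hset, Set.ncard_coe_finset]
  omega

def circledCells (n : ℕ) : Finset (ℕ × ℕ) := {p ∈ Icc 1 n ×ˢ Icc 1 n | Circled n p}

theorem mem_circledCells {n : ℕ} {p : ℕ × ℕ} : p ∈ circledCells n ↔ Circled n p := by
  rw [circledCells, mem_filter, mem_product, mem_Icc, mem_Icc, circled_iff]
  tauto

theorem card_filter_circledCells (n : ℕ) (P : ℕ × ℕ → Prop) [DecidablePred P] :
    #{p ∈ circledCells n | P p} =
      ∑ c ∈ Icc 1 n, #{r ∈ Icc 1 n | Circled n (r, c) ∧ P (r, c)} := by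
  simp only [circledCells, filter_filter, card_filter, sum_product_right]

theorem card_circledCells (n : ℕ) : #(circledCells n) = ∑ c ∈ Icc 1 n, c :=
  calc #(circledCells n) = #{p ∈ circledCells n | True} := by rw [filter_true]
    _ = ∑ c ∈ Icc 1 n, colCount n c := by
      rw [card_filter_circledCells]
      exact sum_congr rfl fun c hc => by simp only [and_true]; exact card_circled_col hc
    _ = ∑ c ∈ Icc 1 n, c :=
      sum_comp_of_injOn (fun _ hc => colCount_mem_Icc hc) (colCount_injOn n) id

namespace IsLatinSquare

variable {n : ℕ} {f : ℕ × ℕ → ℕ}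

theorem mem_Icc_of_circled (hf : IsLatinSquare n f) {p : ℕ × ℕ} (hp : Circled n p) :
    f p ∈ Icc 1 n := by
  obtain ⟨r, c⟩ := p
  rw [circled_iff] at hp
  exact mem_Icc.2 (hf.1 r c hp.1 hp.2.1 hp.2.2.1 hp.2.2.2.1)

theorem card_col_gt_le_min (hf : IsLatinSquare n f) {c : ℕ} (hc : c ∈ Icc 1 n) {m : ℕ}
    (hm : m ≤ n) :
    #{r ∈ Icc 1 n | Circled n (r, c) ∧ n - m < f (r, c)} ≤ min (colCount n c) m := by
  refine le_min ?_ ?_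
  · rw [← card_circled_col hc]
    exact card_le_card (monotone_filter_right _ fun _ _ => And.left)
  · calc #{r ∈ Icc 1 n | Circled n (r, c) ∧ n - m < f (r, c)} ≤ #(Icc (n - m + 1) n) := by
          refine card_le_card_of_injOn (fun r => f (r, c)) (fun r hr => ?_) fun r hr r' hr' h => ?_
          · rw [mem_coe, mem_filter] at hr
            have := mem_Icc.1 (hf.mem_Icc_of_circled hr.2.1)
            exact mem_Icc.2 ⟨hr.2.2, this.2⟩
          · rw [mem_coe, mem_filter, mem_Icc] at hr hr'
            rw [mem_Icc] at hc
            by_contra hne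
            exact hf.2.2 r r' c hr.1.1 hr.1.2 hr'.1.1 hr'.1.2 hc.1 hc.2 hne h
      _ = m := by rw [Nat.card_Icc]; omega

end IsLatinSquare

namespace IsPulsarSolution

variable {n : ℕ} {f : ℕ × ℕ → ℕ}

theorem card_filter_le (hf : IsPulsarSolution n f) {j : ℕ} (hj : j ≤ n) :
    #{p ∈ circledCells n | f p ≤ j} = ∑ v ∈ Icc 1 j, v := by
  refine card_filter_le_eq_sum_Icc (fun p hp => hf.1.mem_Icc_of_circled (mem_circledCells.1 hp))
    (fun p hp => ?_) (card_circledCells n) hj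
  have hself := hf.2 p (mem_circledCells.1 hp)
  rw [← Set.ncard_coe_finset, coe_filter]
  simp only [mem_circledCells]
  exact hself.symm

theorem card_col_gt_eq_min (hf : IsPulsarSolution n f) {m : ℕ} (hm : m ≤ n) {c : ℕ}
    (hc : c ∈ Icc 1 n) :
    #{r ∈ Icc 1 n | Circled n (r, c) ∧ n - m < f (r, c)} = min (colCount n c) m := by
  have htotal : ∑ c ∈ Icc 1 n, #{r ∈ Icc 1 n | Circled n (r, c) ∧ n - m < f (r, c)}
      = ∑ c ∈ Icc 1 n, min (colCount n c) m := by
    rw [← card_filter_circledCells n (fun p => n - m < f p),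
      sum_comp_of_injOn (fun _ hc => colCount_mem_Icc hc) (colCount_injOn n) fun k => min k m]
    have hsplit := card_filter_add_card_filter_not (s := circledCells n) (fun p => f p ≤ n - m)
    rw [card_filter_le hf (by omega), card_circledCells] at hsplit
    have := sum_Icc_min_add_sum_Icc m n
    simp only [not_le] at hsplit
    omega
  exact (sum_eq_sum_iff_of_le fun c hc => hf.1.card_col_gt_le_min hc hm).1 htotal c hc

theorem sub_colCount_lt_of_circled (hf : IsPulsarSolution n f) {r c : ℕ}
    (hrc : Circled n (r, c)) : n - colCount n c < f (r, c) := by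
  obtain ⟨hr1, hrn, hc1, hcn, -⟩ := circled_iff.1 hrc
  have hc : c ∈ Icc 1 n := mem_Icc.2 ⟨hc1, hcn⟩
  have hcard := hf.card_col_gt_eq_min (mem_Icc.1 (colCount_mem_Icc hc)).2 hc
  rw [min_self, ← filter_filter] at hcard
  exact card_filter_eq_iff.1 (hcard.trans (card_circled_col hc).symm) r
    (mem_filter.2 ⟨mem_Icc.2 ⟨hr1, hrn⟩, hrc⟩)

theorem top_row_eq (hf : IsPulsarSolution n f) {c : ℕ} (hc : c ∈ Icc 1 n) :
    f (1, c) = n + 1 - colCount n c := by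
  have hle : ∀ c ∈ Icc 1 n, n + 1 - colCount n c ≤ f (1, c) := fun c hc => by
    have := hf.sub_colCount_lt_of_circled (circled_top_row hc)
    omega
  have hsum_lower : ∑ c ∈ Icc 1 n, (n + 1 - colCount n c) = ∑ c ∈ Icc 1 n, c := by
    refine sum_comp_of_injOn (g := fun c => n + 1 - colCount n c) (fun c hc => ?_)
      (fun x hx y hy h => colCount_injOn n hx hy ?_) id
    · have := mem_Icc.1 (colCount_mem_Icc hc); simp only [mem_coe, mem_Icc]; omega
    · have := mem_Icc.1 (colCount_mem_Icc hx); have := mem_Icc.1 (colCount_mem_Icc hy)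
      simp only at h; omega
  have hsum_row : ∑ c ∈ Icc 1 n, f (1, c) = ∑ c ∈ Icc 1 n, c := by
    refine sum_comp_of_injOn (g := fun c => f (1, c))
      (fun c hc => hf.1.mem_Icc_of_circled (circled_top_row hc)) (fun x hx y hy h => ?_) id
    rw [mem_coe, mem_Icc] at hx hy
    by_contra hne
    exact hf.1.2.1 1 x y le_rfl (hx.1.trans hx.2) hx.1 hx.2 hy.1 hy.2 hne h
  exact ((sum_eq_sum_iff_of_le hle).1 (hsum_lower.trans hsum_row.symm) c hc).symm

end IsPulsarSolution

theorem pulsar_top_row_formula_general (n : ℕ) (f : ℕ × ℕ → ℕ)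
    (hf : IsPulsarSolution n f) :
    ∀ c, 1 ≤ c → c ≤ n →
      f (1, c) = n + 1 - Set.ncard {r : ℕ | Circled n (r, c)} ∧
      f (1, c) = Set.ncard {r : ℕ | 1 ≤ r ∧ r ≤ n ∧ ¬ Circled n (r, c)} + 1 := by
  intro c hc1 hc2
  have hc : c ∈ Icc 1 n := mem_Icc.2 ⟨hc1, hc2⟩
  have hA := mem_Icc.1 (colCount_mem_Icc hc)
  rw [ncard_circled_col hc, ncard_uncircled_col hc, hf.top_row_eq hc]
  omega

/-- In any solution of the `n × n` Pulsar puzzle, the top-row entry in column `c` is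
`n + 1` minus the number of circled cells in column `c`; equivalently one more than
the number of uncircled cells in column `c`. -/
theorem pulsar_top_row_formula (n : ℕ) (hn : 1 ≤ n) (f : ℕ × ℕ → ℕ)
    (hf : IsPulsarSolution n f) :
    ∀ c, 1 ≤ c → c ≤ n →
      f (1, c) = n + 1 - Set.ncard {r : ℕ | Circled n (r, c)} ∧
      f (1, c) = Set.ncard {r : ℕ | 1 ≤ r ∧ r ≤ n ∧ ¬ Circled n (r, c)} + 1 :=
  pulsar_top_row_formula_general n f hf
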